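/- Let p and q be real numbers with 0 < p < 1/2 and 1 - p ≤ q ≤ 1. Then strategic signaling increases the false positive rate and decreases the false negative rate relative to revealing: FPR_s(p,q) ≥ FPR_r(p,q), and ((1 - 2·p)/(1-p))·FNR_r(p,q) ≤ FNR_s(p,q) ≤ FNR_r(p,q). -/

import Mathlib

/-- The revealing school's false positive rate. -/
noncomputable def FPR_r (p q : ℝ) : ℝ := 1 - q

/-- The revealing school's false negative rate. -/
noncomputable def FNR_r (p q : ℝ) : ℝ := 1 - q

/-- The strategic school's false positive rate. -/
noncomputable def FPR_s (p q : ℝ) : ℝ := 1 - q + q * (p + q - 1) / (q - p)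

/-- The strategic school's false negative rate. -/
noncomputable def FNR_s (p q : ℝ) : ℝ := (1 - q) * (1 - 2 * p) / (q - p)

/-! Each comparison is the sign of a difference that simplifies to a product of the factors
`q`, `1 - q`, `1 - 2p`, `p + q - 1` over `q - p` (and `1 - p`); all are nonnegative, and
`q - p ≥ 1 - 2p > 0`. -/

lemma FPR_s_sub_FPR_r (p q : ℝ) :
    FPR_s p q - FPR_r p q = q * (p + q - 1) / (q - p) := by
  unfold FPR_s FPR_r
  ring

lemma FNR_r_sub_FNR_s {p q : ℝ} (hqp : q - p ≠ 0) :
    FNR_r p q - FNR_s p q = (1 - q) * (p + q - 1) / (q - p) := by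
  unfold FNR_r FNR_s
  field_simp
  ring

lemma FNR_s_sub_mul_FNR_r {p q : ℝ} (hqp : q - p ≠ 0) (hp : 1 - p ≠ 0) :
    FNR_s p q - (1 - 2 * p) / (1 - p) * FNR_r p q
      = (1 - q) ^ 2 * (1 - 2 * p) / ((q - p) * (1 - p)) := by
  unfold FNR_s FNR_r
  field_simp
  ring

theorem strategic_vs_revealing_rates_general (p q : ℝ) (hp : p < 1/2)
    (hq1 : 1 - p ≤ q) (hq2 : q ≤ 1) :
    FPR_s p q ≥ FPR_r p q ∧
    ((1 - 2 * p) / (1 - p)) * FNR_r p q ≤ FNR_s p q ∧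
    FNR_s p q ≤ FNR_r p q := by
  have hqp : 0 < q - p := by linarith
  have hp1 : 0 < 1 - p := by linarith
  have h2p : 0 ≤ 1 - 2 * p := by linarith
  have hpq : 0 ≤ p + q - 1 := by linarith
  have hq : 0 ≤ 1 - q := by linarith
  have hq0 : 0 ≤ q := by linarith
  refine ⟨?_, ?_, ?_⟩
  · rw [ge_iff_le, ← sub_nonneg, FPR_s_sub_FPR_r]
    positivity
  · rw [← sub_nonneg, FNR_s_sub_mul_FNR_r hqp.ne' hp1.ne']
    positivity
  · rw [← sub_nonneg, FNR_r_sub_FNR_s hqp.ne']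
    positivity

/-- Strategic signaling increases the FPR and decreases the FNR relative to
revealing: FPR_s ≥ FPR_r and ((1-2p)/(1-p))·FNR_r ≤ FNR_s ≤ FNR_r. -/
theorem strategic_vs_revealing_rates (p q : ℝ) (hp0 : 0 < p) (hp : p < 1/2)
    (hq1 : 1 - p ≤ q) (hq2 : q ≤ 1) :
    FPR_s p q ≥ FPR_r p q ∧
    ((1 - 2 * p) / (1 - p)) * FNR_r p q ≤ FNR_s p q ∧
    FNR_s p q ≤ FNR_r p q :=
  strategic_vs_revealing_rates_general p q hp hq1 hq2
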